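/- arXiv:2502.19077 — 3 statements merged into one kernel-verified Lean document; each statement's English description precedes it below -/
import Mathlib

section
/- Any feasible association sequence with a repeated GBS can be shortened: if I = [I₀,…,I_N] is a sequence of GBS indices with I_k = I_q for some k < q, and the UAV trajectory is feasible (each segment lies in the coverage disk of its associated GBS, and total time ≤ T_max), then there exists a feasible trajectory whose association sequence is [I₀,…,I_k, I_{q+1},…,I_N], has strictly fewer handovers (N − (q−k) < N), and has total travel time no larger than the original. Concretely: replacing the sub-trajectory between the point where the UAV leaves GBS I_k's disk and the point where it re-enters by the straight-line segment at maximum speed preserves the coverage constraint (both endpoints lie in GBS I_k's disk) and does not increase travel time. -/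
theorem remove_repeated_association
    (M N : ℕ) (g : ℕ → EuclideanSpace ℝ (Fin 2)) (d : ℕ → ℝ)
    (Vmax Tmax : ℝ) (hV : 0 < Vmax)
    (u : ℕ → EuclideanSpace ℝ (Fin 2)) (I : ℕ → ℕ)
    (hIM : ∀ i ≤ N, I i < M)
    (hcov : ∀ i ≤ N, segment ℝ (u i) (u (i + 1)) ⊆ Metric.closedBall (g (I i)) (d (I i)))
    (htime : (∑ i ∈ Finset.range (N + 1), ‖u (i + 1) - u i‖) ≤ Tmax * Vmax)
    (k q : ℕ) (hkq : k < q) (hqN : q ≤ N) (hrep : I k = I q) :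
    ∃ (N' : ℕ) (u' : ℕ → EuclideanSpace ℝ (Fin 2)) (I' : ℕ → ℕ),
      N' = N - (q - k) ∧ N' < N ∧
      u' 0 = u 0 ∧ u' (N' + 1) = u (N + 1) ∧
      (∀ i ≤ N', I' i = if i ≤ k then I i else I (i + (q - k))) ∧
      (∀ i ≤ N', segment ℝ (u' i) (u' (i + 1)) ⊆
        Metric.closedBall (g (I' i)) (d (I' i))) ∧
      (∑ i ∈ Finset.range (N' + 1), ‖u' (i + 1) - u' i‖) ≤
        (∑ i ∈ Finset.range (N + 1), ‖u (i + 1) - u i‖) ∧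
      (∑ i ∈ Finset.range (N' + 1), ‖u' (i + 1) - u' i‖) ≤ Tmax * Vmax := by
  generalize hs : q - k = s
  have hs1 : 1 ≤ s := by omega
  have hkq' : k + s = q := by omega
  have hkN' : k ≤ N - s := by omega
  have hsN : s ≤ N := by omega
  set u' : ℕ → EuclideanSpace ℝ (Fin 2) := fun i => if i ≤ k then u i else u (i + s)
    with hu'
  set I' : ℕ → ℕ := fun i => if i ≤ k then I i else I (i + s) with hI'
  have hsum : (∑ i ∈ Finset.range (N - s + 1), ‖u' (i + 1) - u' i‖) ≤
      (∑ i ∈ Finset.range (N + 1), ‖u (i + 1) - u i‖) := by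
    have split' : (∑ i ∈ Finset.range (N - s + 1), ‖u' (i + 1) - u' i‖) =
        (∑ i ∈ Finset.range k, ‖u (i + 1) - u i‖) + ‖u (q + 1) - u k‖ +
        (∑ i ∈ Finset.Ico (k + 1) (N - s + 1), ‖u (i + 1 + s) - u (i + s)‖) := by
      rw [Finset.range_eq_Ico, ← Finset.sum_Ico_consecutive _ (Nat.zero_le (k + 1)) (by omega),
        Finset.sum_Ico_succ_top (Nat.zero_le k), ← Finset.range_eq_Ico]
      congr 1
      · congr 1
        · apply Finset.sum_congr rfl
          intro i hi
          simp only [Finset.mem_range] at hi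
          have h1 : i ≤ k := by omega
          have h2 : i + 1 ≤ k := by omega
          simp only [hu']
          rw [if_pos h2, if_pos h1]
        · have h1 : ¬ (k + 1 ≤ k) := by omega
          simp only [hu']
          rw [if_neg h1, if_pos le_rfl]
          have h2 : k + 1 + s = q + 1 := by omega
          rw [h2]
      · apply Finset.sum_congr rfl
        intro i hi
        simp only [Finset.mem_Ico] at hi
        have h1 : ¬ (i + 1 ≤ k) := by omega
        have h2 : ¬ (i ≤ k) := by omega
        simp only [hu']
        rw [if_neg h1, if_neg h2]
    have split : (∑ i ∈ Finset.range (N + 1), ‖u (i + 1) - u i‖) =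
        (∑ i ∈ Finset.range k, ‖u (i + 1) - u i‖) +
        (∑ i ∈ Finset.Ico k (q + 1), ‖u (i + 1) - u i‖) +
        (∑ i ∈ Finset.Ico (q + 1) (N + 1), ‖u (i + 1) - u i‖) := by
      rw [Finset.range_eq_Ico, ← Finset.sum_Ico_consecutive _ (Nat.zero_le k) (by omega : k ≤ N + 1),
        ← Finset.sum_Ico_consecutive _ (by omega : k ≤ q + 1) (by omega : q + 1 ≤ N + 1),
        ← Finset.range_eq_Ico]
      ring
    rw [split', split]
    have hmid : ‖u (q + 1) - u k‖ ≤ ∑ i ∈ Finset.Ico k (q + 1), ‖u (i + 1) - u i‖ := by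
      have h := dist_le_range_sum_dist (fun i => u (k + i)) (s + 1)
      simp only [dist_eq_norm] at h
      rw [Finset.sum_Ico_eq_sum_range]
      have h2 : (q + 1) - k = s + 1 := by omega
      rw [h2]
      have e2 : k + (s + 1) = q + 1 := by omega
      have e0 : k + 0 = k := by omega
      rw [e2, e0] at h
      calc ‖u (q + 1) - u k‖ = ‖u k - u (q + 1)‖ := by rw [norm_sub_rev]
        _ ≤ ∑ i ∈ Finset.range (s + 1), ‖u (k + i) - u (k + (i + 1))‖ := h
        _ = ∑ i ∈ Finset.range (s + 1), ‖u (k + i + 1) - u (k + i)‖ := by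
            apply Finset.sum_congr rfl
            intro i _
            rw [norm_sub_rev, Nat.add_assoc]
    have htail : (∑ i ∈ Finset.Ico (k + 1) (N - s + 1), ‖u (i + 1 + s) - u (i + s)‖) =
        (∑ i ∈ Finset.Ico (q + 1) (N + 1), ‖u (i + 1) - u i‖) := by
      rw [Finset.sum_Ico_eq_sum_range, Finset.sum_Ico_eq_sum_range]
      have h1 : (N - s + 1) - (k + 1) = (N + 1) - (q + 1) := by omega
      rw [h1]
      apply Finset.sum_congr rfl
      intro i _
      have e1 : k + 1 + i + 1 + s = q + 1 + i + 1 := by omega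
      have e2 : k + 1 + i + s = q + 1 + i := by omega
      rw [e1, e2]
    rw [htail]
    gcongr
  refine ⟨N - s, u', I', rfl, by omega, ?_, ?_, fun i _ => rfl, ?_, hsum, le_trans hsum htime⟩
  · simp only [hu']; rw [if_pos (Nat.zero_le k)]
  · have h1 : ¬ (N - s + 1 ≤ k) := by omega
    have h2 : N - s + 1 + s = N + 1 := by omega
    simp only [hu']
    rw [if_neg h1, h2]
  · intro i hi
    simp only [hu', hI']
    rcases lt_trichotomy i k with h | h | h
    · have h1 : i ≤ k := le_of_lt h
      have h2 : i + 1 ≤ k := by omega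
      rw [if_pos h1, if_pos h2, if_pos h1]
      exact hcov i (by omega)
    · subst h
      have h2 : ¬ (i + 1 ≤ i) := by omega
      rw [if_pos le_rfl, if_neg h2, if_pos le_rfl]
      have h1 : u i ∈ Metric.closedBall (g (I i)) (d (I i)) :=
        hcov i (by omega) (left_mem_segment ℝ _ _)
      have h3 : u (i + 1 + s) ∈ Metric.closedBall (g (I i)) (d (I i)) := by
        rw [hrep]
        have e : i + 1 + s = q + 1 := by omega
        rw [e]
        exact hcov q hqN (right_mem_segment ℝ (u q) (u (q + 1)))
      exact (convex_closedBall _ _).segment_subset h1 h3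
    · have h1 : ¬ (i ≤ k) := by omega
      have h2 : ¬ (i + 1 ≤ k) := by omega
      rw [if_neg h1, if_neg h2, if_neg h1]
      have e : i + 1 + s = i + s + 1 := by omega
      rw [e]
      exact hcov (i + s) (by omega)
end

section
/- The minimal number of handovers over all feasible solutions is at most M − 1, where M is the number of GBSs: any feasible solution can be transformed into one whose association sequence has pairwise distinct entries (hence length at most M, i.e., at most M − 1 handovers) without increasing travel time or violating coverage constraints. -/
/-!
If the associated GBSs `I i` and `I j` (with `i < j`) coincide, the waypoints strictly between
the start of segment `i` and the end of segment `j` can be skipped: both endpoints of the new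
segment lie in the same convex disk, so the whole segment does, and by the triangle inequality
the shortcut is no longer than the detour it replaces. Hence a route with the fewest segments
among the covered routes with the same endpoints and no greater length visits pairwise distinct
GBSs, so at most `M` of them.
-/

open Finset

theorem sum_norm_sub_comp_le_sum_norm_sub {E : Type*} [SeminormedAddCommGroup E] (u : ℕ → E)
    {σ : ℕ → ℕ} (hσ : Monotone σ) (n : ℕ) :
    ∑ m ∈ range n, ‖u (σ (m + 1)) - u (σ m)‖ ≤ ∑ m ∈ range (σ n), ‖u (m + 1) - u m‖ := by
  induction n with
  | zero => exact sum_nonneg fun _ _ => norm_nonneg _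
  | succ n ih =>
    rw [sum_range_succ, ← sum_range_add_sum_Ico _ (hσ n.le_succ)]
    gcongr
    simpa only [dist_eq_norm'] using dist_le_Ico_sum_dist u (hσ n.le_succ)

/-- The index map of the route that jumps from vertex `i` straight to vertex `i + k + 1`. -/
def skipIndex (i k m : ℕ) : ℕ := if m ≤ i then m else m + k

theorem skipIndex_of_le {i k m : ℕ} (h : m ≤ i) : skipIndex i k m = m := if_pos h

theorem skipIndex_of_lt {i k m : ℕ} (h : i < m) : skipIndex i k m = m + k :=
  if_neg (Nat.not_le.2 h)

theorem monotone_skipIndex (i k : ℕ) : Monotone (skipIndex i k) := by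
  intro m m' h
  unfold skipIndex
  split_ifs <;> omega

theorem skipIndex_le {i k n m : ℕ} (hk : i + k ≤ n) (hm : m ≤ n - k) : skipIndex i k m ≤ n := by
  unfold skipIndex
  split_ifs <;> omega

theorem skipIndex_sub_add_one {i k n : ℕ} (hk : i + k ≤ n) :
    skipIndex i k (n - k + 1) = n + 1 := by
  rw [skipIndex_of_lt (by omega)]
  omega

theorem segment_skipIndex_subset {E ι : Type*} [AddCommGroup E] [Module ℝ E] {C : ι → Set E}
    (hC : ∀ c, Convex ℝ (C c)) {n i k : ℕ} {u : ℕ → E}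
    {I : ℕ → ι} (hcov : ∀ m ≤ n, segment ℝ (u m) (u (m + 1)) ⊆ C (I m))
    (hk : i + k ≤ n) (hI : I i = I (i + k)) :
    ∀ m ≤ n - k, segment ℝ (u (skipIndex i k m)) (u (skipIndex i k (m + 1))) ⊆
      C (I (skipIndex i k m)) := by
  intro m hm
  rcases lt_trichotomy m i with h | rfl | h
  · rw [skipIndex_of_le h.le, skipIndex_of_le h]
    exact hcov m (by omega)
  · rw [skipIndex_of_le le_rfl, skipIndex_of_lt m.lt_succ_self]
    refine (hC _).segment_subset (hcov m (by omega) (left_mem_segment ℝ _ _)) ?_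
    rw [hI, show m + 1 + k = m + k + 1 by omega]
    exact hcov (m + k) hk (right_mem_segment ℝ _ _)
  · rw [skipIndex_of_lt h, skipIndex_of_lt (by omega), show m + 1 + k = m + k + 1 by omega]
    exact hcov (m + k) (by omega)

theorem exists_route_injOn {E ι : Type*} [SeminormedAddCommGroup E] [Module ℝ E]
    {C : ι → Set E} (hC : ∀ c, Convex ℝ (C c)) (S : Set ι) {N : ℕ} {u : ℕ → E} {I : ℕ → ι}
    (hS : ∀ i ≤ N, I i ∈ S) (hcov : ∀ i ≤ N, segment ℝ (u i) (u (i + 1)) ⊆ C (I i)) :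
    ∃ (N' : ℕ) (u' : ℕ → E) (I' : ℕ → ι),
      (∀ i ≤ N', I' i ∈ S) ∧ Set.InjOn I' (Set.Iic N') ∧
      u' 0 = u 0 ∧ u' (N' + 1) = u (N + 1) ∧
      (∀ i ≤ N', segment ℝ (u' i) (u' (i + 1)) ⊆ C (I' i)) ∧
      ∑ i ∈ range (N' + 1), ‖u' (i + 1) - u' i‖ ≤ ∑ i ∈ range (N + 1), ‖u (i + 1) - u i‖ := by
  classical
  let HasShorterRoute (n : ℕ) : Prop := ∃ (v : ℕ → E) (J : ℕ → ι),
    (∀ i ≤ n, J i ∈ S) ∧ v 0 = u 0 ∧ v (n + 1) = u (N + 1) ∧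
      (∀ i ≤ n, segment ℝ (v i) (v (i + 1)) ⊆ C (J i)) ∧
      ∑ i ∈ range (n + 1), ‖v (i + 1) - v i‖ ≤ ∑ i ∈ range (N + 1), ‖u (i + 1) - u i‖
  have hex : ∃ n, HasShorterRoute n := ⟨N, u, I, hS, rfl, rfl, hcov, le_rfl⟩
  set n := Nat.find hex
  obtain ⟨v, J, hJS, hv0, hvend, hvcov, hvlen⟩ := Nat.find_spec hex
  have no_repeat : ∀ i j, i < j → j ≤ n → J i ≠ J j := by
    intro i j hij hjn hJ
    obtain ⟨k, rfl⟩ := Nat.exists_eq_add_of_lt hij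
    have hk : i + (k + 1) ≤ n := hjn
    have hlast := skipIndex_sub_add_one hk
    have hpoly := sum_norm_sub_comp_le_sum_norm_sub v (monotone_skipIndex i (k + 1))
      (n - (k + 1) + 1)
    rw [hlast] at hpoly
    exact Nat.find_min hex (m := n - (k + 1)) (by omega)
      ⟨v ∘ skipIndex i (k + 1), J ∘ skipIndex i (k + 1),
        fun m hm => hJS _ (skipIndex_le hk hm),
        by rw [Function.comp_apply, skipIndex_of_le i.zero_le, hv0],
        by rw [Function.comp_apply, hlast, hvend],
        segment_skipIndex_subset hC hvcov hk hJ, hpoly.trans hvlen⟩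
  refine ⟨n, v, J, hJS, fun i hi j hj hJ => ?_, hv0, hvend, hvcov, hvlen⟩
  by_contra hne
  rcases Nat.lt_or_gt_of_ne hne with h | h
  exacts [no_repeat i j h hj hJ, no_repeat j i h hi hJ.symm]

theorem succ_le_of_injOn_Iic {f : ℕ → ℕ} {n M : ℕ} (hf : ∀ i ≤ n, f i < M)
    (hinj : Set.InjOn f (Set.Iic n)) : n + 1 ≤ M := by
  simpa using card_le_card_of_injOn f (s := Iic n) (t := range M)
    (fun i hi => mem_range.2 (hf i (mem_Iic.1 hi))) (by rwa [coe_Iic])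

theorem at_most_M_minus_one_handovers_general
    (M N : ℕ) (g : ℕ → EuclideanSpace ℝ (Fin 2)) (d : ℕ → ℝ)
    (Vmax Tmax : ℝ)
    (u : ℕ → EuclideanSpace ℝ (Fin 2)) (I : ℕ → ℕ)
    (hIM : ∀ i ≤ N, I i < M)
    (hcov : ∀ i ≤ N, segment ℝ (u i) (u (i + 1)) ⊆ Metric.closedBall (g (I i)) (d (I i)))
    (htime : (∑ i ∈ Finset.range (N + 1), ‖u (i + 1) - u i‖) ≤ Tmax * Vmax) :
    ∃ (N' : ℕ) (u' : ℕ → EuclideanSpace ℝ (Fin 2)) (I' : ℕ → ℕ),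
      N' ≤ M - 1 ∧
      (∀ i ≤ N', I' i < M) ∧
      (∀ i ≤ N', ∀ j ≤ N', I' i = I' j → i = j) ∧
      u' 0 = u 0 ∧ u' (N' + 1) = u (N + 1) ∧
      (∀ i ≤ N', segment ℝ (u' i) (u' (i + 1)) ⊆
        Metric.closedBall (g (I' i)) (d (I' i))) ∧
      (∑ i ∈ Finset.range (N' + 1), ‖u' (i + 1) - u' i‖) ≤
        (∑ i ∈ Finset.range (N + 1), ‖u (i + 1) - u i‖) ∧
      (∑ i ∈ Finset.range (N' + 1), ‖u' (i + 1) - u' i‖) ≤ Tmax * Vmax := by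
  obtain ⟨N', u', I', hIM', hinj, h0, hend, hcov', hlen⟩ :=
    exists_route_injOn (fun c => convex_closedBall (g c) (d c)) (Set.Iio M) hIM hcov
  have hcard : N' + 1 ≤ M := succ_le_of_injOn_Iic hIM' hinj
  exact ⟨N', u', I', by omega, hIM', fun i hi j hj => @hinj i hi j hj, h0, hend, hcov', hlen,
    hlen.trans htime⟩

theorem at_most_M_minus_one_handovers
    (M N : ℕ) (hM : 1 ≤ M) (g : ℕ → EuclideanSpace ℝ (Fin 2)) (d : ℕ → ℝ)
    (Vmax Tmax : ℝ) (hV : 0 < Vmax)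
    (u : ℕ → EuclideanSpace ℝ (Fin 2)) (I : ℕ → ℕ)
    (hIM : ∀ i ≤ N, I i < M)
    (hcov : ∀ i ≤ N, segment ℝ (u i) (u (i + 1)) ⊆ Metric.closedBall (g (I i)) (d (I i)))
    (htime : (∑ i ∈ Finset.range (N + 1), ‖u (i + 1) - u i‖) ≤ Tmax * Vmax) :
    ∃ (N' : ℕ) (u' : ℕ → EuclideanSpace ℝ (Fin 2)) (I' : ℕ → ℕ),
      N' ≤ M - 1 ∧
      (∀ i ≤ N', I' i < M) ∧
      (∀ i ≤ N', ∀ j ≤ N', I' i = I' j → i = j) ∧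
      u' 0 = u 0 ∧ u' (N' + 1) = u (N + 1) ∧
      (∀ i ≤ N', segment ℝ (u' i) (u' (i + 1)) ⊆
        Metric.closedBall (g (I' i)) (d (I' i))) ∧
      (∑ i ∈ Finset.range (N' + 1), ‖u' (i + 1) - u' i‖) ≤
        (∑ i ∈ Finset.range (N + 1), ‖u (i + 1) - u i‖) ∧
      (∑ i ∈ Finset.range (N' + 1), ‖u' (i + 1) - u' i‖) ≤ Tmax * Vmax :=
  at_most_M_minus_one_handovers_general M N g d Vmax Tmax u I hIM hcov htime
end

section
/- Consider the trajectory of the proposed handover design: from u₀ straight to g_{I₀}, then straight between consecutive GBS centers g_{I₀}, g_{I₁}, …, g_{I_N}, then straight from g_{I_N} to u_{N+1}. If ‖u₀ − g_{I₀}‖ ≤ d̄_{I₀}, ‖u_{N+1} − g_{I_N}‖ ≤ d̄_{I_N}, and ‖g_{I_i} − g_{I_{i−1}}‖ ≤ d̄_{I_i} + d̄_{I_{i−1}} for all i = 1,…,N, then every point of this trajectory lies in the coverage disk of at least one of the GBSs I₀,…,I_N. -/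
lemma seg_two_balls {E : Type*} [NormedAddCommGroup E] [NormedSpace ℝ E]
    (a b : E) (ra rb : ℝ) (h : ‖b - a‖ ≤ ra + rb) (p : E)
    (hp : p ∈ segment ℝ a b) :
    p ∈ Metric.closedBall a ra ∪ Metric.closedBall b rb := by
  obtain ⟨s, t, hs, ht, hst, rfl⟩ := hp
  by_contra hc
  simp only [Set.mem_union, not_or] at hc
  obtain ⟨h1, h2⟩ := hc
  simp only [Metric.mem_closedBall, not_le, dist_eq_norm] at h1 h2
  have e1 : s • a + t • b - a = t • (b - a) := by
    have : s = 1 - t := by linarith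
    subst this; module
  have e2 : s • a + t • b - b = s • (a - b) := by
    have : s = 1 - t := by linarith
    subst this; module
  rw [e1] at h1; rw [e2] at h2
  rw [norm_smul, Real.norm_of_nonneg ht] at h1
  rw [norm_smul, Real.norm_of_nonneg hs, ← norm_neg, neg_sub] at h2
  nlinarith [norm_nonneg (b - a)]

theorem proposed_trajectory_covered
    (M N : ℕ) (g : ℕ → EuclideanSpace ℝ (Fin 2)) (d : ℕ → ℝ)
    (hd : ∀ m < M, 0 < d m)
    (u0 uF : EuclideanSpace ℝ (Fin 2)) (I : ℕ → ℕ)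
    (hIM : ∀ i ≤ N, I i < M)
    (hstart : ‖u0 - g (I 0)‖ ≤ d (I 0))
    (hfinal : ‖uF - g (I N)‖ ≤ d (I N))
    (hconsec : ∀ i, 1 ≤ i → i ≤ N → ‖g (I i) - g (I (i - 1))‖ ≤ d (I i) + d (I (i - 1))) :
    ∀ p, p ∈ segment ℝ u0 (g (I 0)) ∪
          (⋃ i ∈ Finset.range N, segment ℝ (g (I i)) (g (I (i + 1)))) ∪
          segment ℝ (g (I N)) uF →
      ∃ j ≤ N, p ∈ Metric.closedBall (g (I j)) (d (I j)) := by
  intro p hp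
  have hd0 : 0 < d (I 0) := hd _ (hIM 0 (Nat.zero_le N))
  have hdN : 0 < d (I N) := hd _ (hIM N le_rfl)
  rcases hp with (hp | hp) | hp
  · -- segment u0 (g I0): convexity of the ball around g (I 0)
    refine ⟨0, Nat.zero_le N, ?_⟩
    have hu0 : u0 ∈ Metric.closedBall (g (I 0)) (d (I 0)) := by
      simpa [Metric.mem_closedBall, dist_eq_norm] using hstart
    have hg : g (I 0) ∈ Metric.closedBall (g (I 0)) (d (I 0)) := by
      simp [hd0.le]
    exact (convex_closedBall _ _).segment_subset hu0 hg hp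
  · simp only [Set.mem_iUnion, Finset.mem_range] at hp
    obtain ⟨i, hi, hpseg⟩ := hp
    have hcon := hconsec (i + 1) (Nat.le_add_left 1 i) hi
    simp only [Nat.add_sub_cancel] at hcon
    have := seg_two_balls (g (I i)) (g (I (i + 1))) (d (I i)) (d (I (i + 1)))
      (by linarith) p hpseg
    rcases this with h | h
    · exact ⟨i, hi.le, h⟩
    · exact ⟨i + 1, hi, h⟩
  · refine ⟨N, le_rfl, ?_⟩
    have huF : uF ∈ Metric.closedBall (g (I N)) (d (I N)) := by
      simpa [Metric.mem_closedBall, dist_eq_norm] using hfinal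
    have hg : g (I N) ∈ Metric.closedBall (g (I N)) (d (I N)) := by
      simp [hdN.le]
    exact (convex_closedBall _ _).segment_subset hg huF hp
end
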